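/- Let F(x) = ∑_{m=1}^M (‖x_m‖² + ε²)^q with 0 < q < 1, ε > 0, where x = (x_1,…,x_M) and x_m ∈ ℝᴷ. Given x⁰, let weights a_m = q(‖x_m⁰‖² + ε²)^{q−1} and let x¹ minimize ∑_m a_m‖x_m‖² over a convex set C containing x⁰. Then F(x¹) ≤ F(x⁰), with equality only if ∑_m a_m‖x_m¹‖² = ∑_m a_m‖x_m⁰‖². -/
import Mathlib

lemma tangent_rpow {a b q : ℝ} (ha : 0 < a) (hb : 0 ≤ b) (hq0 : 0 ≤ q) (hq1 : q ≤ 1) :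
    b ^ q ≤ a ^ q + q * a ^ (q - 1) * (b - a) := by
  have hba : 0 ≤ b / a := by positivity
  have hs : (-1 : ℝ) ≤ b / a - 1 := by linarith
  have key := rpow_one_add_le_one_add_mul_self hs hq0 hq1
  have h1 : 1 + (b / a - 1) = b / a := by ring
  rw [h1] at key
  have hb' : b ^ q = a ^ q * (b / a) ^ q := by
    rw [← Real.mul_rpow ha.le hba]
    congr 1
    field_simp
  have haq : a ^ (q - 1) = a ^ q / a := by
    rw [Real.rpow_sub ha, Real.rpow_one]
  calc b ^ q = a ^ q * (b / a) ^ q := hb'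
    _ ≤ a ^ q * (1 + q * (b / a - 1)) :=
        mul_le_mul_of_nonneg_left key (Real.rpow_nonneg ha.le q)
    _ = a ^ q + q * a ^ (q - 1) * (b - a) := by
        rw [haq]; field_simp

/-- Multi-group monotone descent of the iteratively reweighted scheme. -/
theorem stmt_8 {M K : ℕ} (q ε : ℝ) (hq0 : 0 < q) (hq1 : q < 1) (hε : 0 < ε)
    (C : Set (Fin M → EuclideanSpace ℝ (Fin K))) (hC : Convex ℝ C)
    (x₀ x₁ : Fin M → EuclideanSpace ℝ (Fin K)) (hx₀ : x₀ ∈ C) (hx₁ : x₁ ∈ C)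
    (a : Fin M → ℝ) (ha : ∀ m, a m = q * (‖x₀ m‖ ^ 2 + ε ^ 2) ^ (q - 1))
    (hmin : ∀ x ∈ C, (∑ m, a m * ‖x₁ m‖ ^ 2) ≤ ∑ m, a m * ‖x m‖ ^ 2) :
    (∑ m, (‖x₁ m‖ ^ 2 + ε ^ 2) ^ q) ≤ (∑ m, (‖x₀ m‖ ^ 2 + ε ^ 2) ^ q) ∧
      ((∑ m, (‖x₁ m‖ ^ 2 + ε ^ 2) ^ q) = (∑ m, (‖x₀ m‖ ^ 2 + ε ^ 2) ^ q) →
        (∑ m, a m * ‖x₁ m‖ ^ 2) = ∑ m, a m * ‖x₀ m‖ ^ 2) := by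
  have hterm : ∀ m, (‖x₁ m‖ ^ 2 + ε ^ 2) ^ q ≤
      (‖x₀ m‖ ^ 2 + ε ^ 2) ^ q + (a m * ‖x₁ m‖ ^ 2 - a m * ‖x₀ m‖ ^ 2) := by
    intro m
    have h := tangent_rpow (a := ‖x₀ m‖ ^ 2 + ε ^ 2) (b := ‖x₁ m‖ ^ 2 + ε ^ 2)
      (by positivity) (by positivity) hq0.le hq1.le
    have : q * (‖x₀ m‖ ^ 2 + ε ^ 2) ^ (q - 1) *
        ((‖x₁ m‖ ^ 2 + ε ^ 2) - (‖x₀ m‖ ^ 2 + ε ^ 2))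
        = a m * ‖x₁ m‖ ^ 2 - a m * ‖x₀ m‖ ^ 2 := by
      rw [ha m]; ring
    linarith [h, this.le, this.ge]
  have hsum : (∑ m, (‖x₁ m‖ ^ 2 + ε ^ 2) ^ q) ≤
      (∑ m, (‖x₀ m‖ ^ 2 + ε ^ 2) ^ q) +
        ((∑ m, a m * ‖x₁ m‖ ^ 2) - ∑ m, a m * ‖x₀ m‖ ^ 2) := by
    have := Finset.sum_le_sum (s := Finset.univ) (fun m _ => hterm m)
    simpa [Finset.sum_add_distrib, Finset.sum_sub_distrib] using this
  have hS : (∑ m, a m * ‖x₁ m‖ ^ 2) ≤ ∑ m, a m * ‖x₀ m‖ ^ 2 := hmin x₀ hx₀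
  constructor
  · linarith
  · intro heq; linarith
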